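/- Let V be a finite nonempty type, let p* : ℝ → V → ℝ be a family of unnormalized probabilities such that p*(β, v) > 0 for all β ∈ [0,1] and v ∈ V, and such that for each v the map β ↦ log p*(β, v) is twice continuously differentiable on [0,1]. Then there exists a constant C > 0 such that for all a, b with 0 ≤ a ≤ b ≤ 1, | Var_{μ_a}[ v ↦ log p*(b, v) − log p*(a, v) ] − (b − a)² · g(a) | ≤ C · (b − a)³. (This is the first-order Taylor approximation of the per-step variance used to derive Eq. (7) of the paper, with the covariance remainder of order (Δβ)³.) -/

import Mathlib

/-- Partition function `Z(β) = ∑ v, p*(β, v)`. -/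
noncomputable def Zf {V : Type*} [Fintype V] (pstar : ℝ → V → ℝ) (β : ℝ) : ℝ :=
  ∑ v, pstar β v

/-- Intermediate distribution `μ_β(v) = p*(β, v) / Z(β)`. -/
noncomputable def aisDist {V : Type*} [Fintype V] (pstar : ℝ → V → ℝ) (β : ℝ) (v : V) : ℝ :=
  pstar β v / Zf pstar β

/-- Variance of `f : V → ℝ` under a probability mass function `μ` on a finite type. -/
noncomputable def pmfVar {V : Type*} [Fintype V] (μ : V → ℝ) (f : V → ℝ) : ℝ :=
  ∑ v, μ v * (f v - ∑ w, μ w * f w) ^ 2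

/-- `g(β) = Var_{μ_β}[ v ↦ ∂/∂β log p*(β, v) ]`, with the derivative taken
within `[0,1]` since `p*` is only assumed smooth there. -/
noncomputable def gfun {V : Type*} [Fintype V] (pstar : ℝ → V → ℝ) (β : ℝ) : ℝ :=
  pmfVar (aisDist pstar β)
    (fun v => derivWithin (fun b => Real.log (pstar b v)) (Set.Icc 0 1) β)

/-!
Write `L_v(β) = log p*(β, v)` and `Δ = b - a`. By Taylor's theorem with the second derivative
bounded on `[0, 1]`, `L_v(b) - L_v(a) = Δ L_v'(a) + O(Δ²)` uniformly in `v`, while `Δ L_v'(a)`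
itself is `O(Δ)`. Variance is stable under such perturbations: if `|f - g| ≤ ε` and `|g| ≤ K`
pointwise, the variances differ by `O(K ε + ε²)`, here `O(Δ³)`. Finally
`Var_{μ_a}[Δ L'(a)] = Δ² g(a)`.
-/

theorem IsCompact.exists_bound_of_continuousOn_of_fintype {ι X E : Type*} [Fintype ι]
    [TopologicalSpace X] [SeminormedAddCommGroup E] {K : Set X} (hK : IsCompact K)
    {F : ι → X → E} (hF : ∀ i, ContinuousOn (F i) K) :
    ∃ C, 0 ≤ C ∧ ∀ i, ∀ x ∈ K, ‖F i x‖ ≤ C := by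
  choose B hB using fun i => hK.exists_bound_of_continuousOn (hF i)
  refine ⟨∑ i, |B i|, by positivity, fun i x hx => (hB i x hx).trans ?_⟩
  exact (le_abs_self _).trans
    (Finset.single_le_sum (fun j _ => abs_nonneg (B j)) (Finset.mem_univ i))

theorem iteratedDerivWithin_subset {𝕜 F : Type*} [NontriviallyNormedField 𝕜]
    [NormedAddCommGroup F] [NormedSpace 𝕜 F] {f : 𝕜 → F} {s t : Set 𝕜} {x : 𝕜} {n : ℕ}
    (st : s ⊆ t) (hs : UniqueDiffOn 𝕜 s) (ht : UniqueDiffOn 𝕜 t) (h : ContDiffOn 𝕜 n f t)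
    (hx : x ∈ s) : iteratedDerivWithin n f s x = iteratedDerivWithin n f t x := by
  simp only [iteratedDerivWithin_eq_iteratedFDerivWithin, iteratedFDerivWithin_subset st hs ht h hx]

/-- Unlike `taylor_mean_remainder_bound`, the derivatives are taken within the ambient interval
`[s, t]` rather than within `[a, b]`. -/
theorem abs_sub_sub_mul_derivWithin_le {f : ℝ → ℝ} {s t a b C : ℝ}
    (hf : ContDiffOn ℝ 2 f (Set.Icc s t))
    (hC : ∀ y ∈ Set.Icc s t, ‖iteratedDerivWithin 2 f (Set.Icc s t) y‖ ≤ C)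
    (hsa : s ≤ a) (hab : a ≤ b) (hbt : b ≤ t) :
    |f b - f a - (b - a) * derivWithin f (Set.Icc s t) a| ≤ C * (b - a) ^ 2 := by
  rcases hab.eq_or_lt with rfl | hlt
  · simp
  have hsub : Set.Icc a b ⊆ Set.Icc s t := Set.Icc_subset_Icc hsa hbt
  have hab' : UniqueDiffOn ℝ (Set.Icc a b) := uniqueDiffOn_Icc hlt
  have hst : UniqueDiffOn ℝ (Set.Icc s t) := uniqueDiffOn_Icc (by linarith)
  have hderiv : derivWithin f (Set.Icc a b) a = derivWithin f (Set.Icc s t) a := by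
    simpa only [iteratedDerivWithin_one] using
      iteratedDerivWithin_subset (n := 1) hsub hab' hst (hf.of_le one_le_two)
        (Set.left_mem_Icc.2 hab)
  have htaylor := taylor_mean_remainder_bound (n := 1) hab (hf.mono hsub)
    (Set.right_mem_Icc.2 hab) fun y hy => by
      rw [iteratedDerivWithin_subset hsub hab' hst hf hy]
      exact hC y (hsub hy)
  simp only [taylor_within_apply, Finset.sum_range_succ, Finset.sum_range_zero,
    iteratedDerivWithin_zero, iteratedDerivWithin_one, hderiv, smul_eq_mul] at htaylor
  norm_num at htaylor
  rwa [sub_sub]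

theorem abs_sq_sub_sq_le {x y δ R : ℝ} (hxy : |x - y| ≤ δ) (hy : |y| ≤ R) :
    |x ^ 2 - y ^ 2| ≤ δ * (δ + 2 * R) := by
  have hsum : |(x - y) + 2 * y| ≤ δ + 2 * R := by
    refine (abs_add_le _ _).trans (add_le_add hxy ?_)
    rw [abs_mul, abs_two]
    linarith
  calc |x ^ 2 - y ^ 2| = |x - y| * |(x - y) + 2 * y| := by rw [← abs_mul]; ring_nf
    _ ≤ δ * (δ + 2 * R) := mul_le_mul hxy hsum (abs_nonneg _) ((abs_nonneg _).trans hxy)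

section SubProbability

variable {V : Type*} [Fintype V] {μ : V → ℝ}

theorem abs_sum_mul_le_of_abs_le (hμ0 : ∀ v, 0 ≤ μ v) (hμ1 : ∑ v, μ v ≤ 1)
    {f : V → ℝ} {ε : ℝ} (hε : 0 ≤ ε) (hf : ∀ v, |f v| ≤ ε) : |∑ v, μ v * f v| ≤ ε :=
  calc |∑ v, μ v * f v| ≤ ∑ v, |μ v * f v| := Finset.abs_sum_le_sum_abs _ _
    _ ≤ ∑ v, μ v * ε := Finset.sum_le_sum fun v _ => by
        rw [abs_mul, abs_of_nonneg (hμ0 v)]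
        exact mul_le_mul_of_nonneg_left (hf v) (hμ0 v)
    _ = (∑ v, μ v) * ε := by rw [Finset.sum_mul]
    _ ≤ ε := mul_le_of_le_one_left hε hμ1

theorem pmfVar_const_mul (c : ℝ) (h : V → ℝ) :
    pmfVar μ (fun v => c * h v) = c ^ 2 * pmfVar μ h := by
  have hmean : ∑ w, μ w * (c * h w) = c * ∑ w, μ w * h w := by
    rw [Finset.mul_sum]
    exact Finset.sum_congr rfl fun w _ => by ring
  rw [pmfVar, pmfVar, hmean, Finset.mul_sum _ _ (c ^ 2)]
  exact Finset.sum_congr rfl fun v _ => by ring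

theorem abs_pmfVar_sub_pmfVar_le (hμ0 : ∀ v, 0 ≤ μ v) (hμ1 : ∑ v, μ v ≤ 1)
    {f g : V → ℝ} {ε K : ℝ} (hε : 0 ≤ ε) (hK : 0 ≤ K)
    (hfg : ∀ v, |f v - g v| ≤ ε) (hg : ∀ v, |g v| ≤ K) :
    |pmfVar μ f - pmfVar μ g| ≤ 2 * ε * (2 * ε + 4 * K) := by
  set mf := ∑ w, μ w * f w
  set mg := ∑ w, μ w * g w
  have hmean : |mf - mg| ≤ ε := by
    simpa only [mf, mg, ← Finset.sum_sub_distrib, mul_sub] using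
      abs_sum_mul_le_of_abs_le hμ0 hμ1 hε hfg
  have hmg : |mg| ≤ K := abs_sum_mul_le_of_abs_le hμ0 hμ1 hK hg
  have hpoint : ∀ v, |(f v - mf) ^ 2 - (g v - mg) ^ 2| ≤ 2 * ε * (2 * ε + 4 * K) := by
    intro v
    have hdiff : |(f v - mf) - (g v - mg)| ≤ 2 * ε :=
      calc |(f v - mf) - (g v - mg)| = |(f v - g v) - (mf - mg)| := by ring_nf
        _ ≤ |f v - g v| + |mf - mg| := abs_sub _ _
        _ ≤ 2 * ε := by linarith [hfg v]
    have hcentred : |g v - mg| ≤ 2 * K := (abs_sub _ _).trans (by linarith [hg v])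
    have := abs_sq_sub_sq_le hdiff hcentred
    linarith
  have hsplit : pmfVar μ f - pmfVar μ g = ∑ v, μ v * ((f v - mf) ^ 2 - (g v - mg) ^ 2) := by
    simp only [pmfVar, mf, mg, ← Finset.sum_sub_distrib, mul_sub]
  rw [hsplit]
  exact abs_sum_mul_le_of_abs_le hμ0 hμ1 (by positivity) hpoint

end SubProbability

theorem aisDist_nonneg {V : Type*} [Fintype V] {pstar : ℝ → V → ℝ} {β : ℝ}
    (hp : ∀ v, 0 ≤ pstar β v) (v : V) : 0 ≤ aisDist pstar β v :=
  div_nonneg (hp v) (Finset.sum_nonneg fun w _ => hp w)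

theorem sum_aisDist_le_one {V : Type*} [Fintype V] (pstar : ℝ → V → ℝ) (β : ℝ) :
    ∑ v, aisDist pstar β v ≤ 1 := by
  simp only [aisDist, ← Finset.sum_div]
  exact div_self_le_one _

theorem per_step_variance_taylor_general
    {V : Type*} [Fintype V] (pstar : ℝ → V → ℝ)
    (hpos : ∀ b ∈ Set.Icc (0 : ℝ) 1, ∀ v : V, 0 < pstar b v)
    (hsmooth : ∀ v : V,
      ContDiffOn ℝ 2 (fun b => Real.log (pstar b v)) (Set.Icc 0 1)) :
    ∃ C > 0, ∀ a b : ℝ, 0 ≤ a → a ≤ b → b ≤ 1 →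
      |pmfVar (aisDist pstar a)
          (fun v => Real.log (pstar b v) - Real.log (pstar a v))
        - (b - a) ^ 2 * gfun pstar a| ≤ C * (b - a) ^ 3 := by
  have hs : UniqueDiffOn ℝ (Set.Icc (0 : ℝ) 1) := uniqueDiffOn_Icc zero_lt_one
  obtain ⟨M1, hM1, hderiv⟩ := isCompact_Icc.exists_bound_of_continuousOn_of_fintype
    fun v => (hsmooth v).continuousOn_derivWithin hs one_le_two
  obtain ⟨M2, hM2, hderiv2⟩ := isCompact_Icc.exists_bound_of_continuousOn_of_fintype
    fun v => (hsmooth v).continuousOn_iteratedDerivWithin le_rfl hs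
  refine ⟨8 * M1 * M2 + 4 * M2 ^ 2 + 1, by positivity, fun a b ha hab hb => ?_⟩
  have hΔ : 0 ≤ b - a := sub_nonneg.2 hab
  have htaylor := fun v => abs_sub_sub_mul_derivWithin_le (hsmooth v) (hderiv2 v) ha hab hb
  have hlinear : ∀ v, |(b - a) * derivWithin (fun β => Real.log (pstar β v)) (Set.Icc 0 1) a|
      ≤ M1 * (b - a) := fun v => by
    rw [abs_mul, abs_of_nonneg hΔ, mul_comm]
    exact mul_le_mul_of_nonneg_right (hderiv v a ⟨ha, hab.trans hb⟩) hΔ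
  have hvar := abs_pmfVar_sub_pmfVar_le
    (aisDist_nonneg fun v => (hpos a ⟨ha, hab.trans hb⟩ v).le) (sum_aisDist_le_one pstar a)
    (by positivity) (by positivity) htaylor hlinear
  rw [gfun, ← pmfVar_const_mul]
  refine hvar.trans ?_
  have hΔ1 : b - a ≤ 1 := by linarith
  calc _ = (8 * M1 * M2 + 4 * M2 ^ 2 * (b - a)) * (b - a) ^ 3 := by ring
    _ ≤ (8 * M1 * M2 + 4 * M2 ^ 2 + 1) * (b - a) ^ 3 := by
      gcongr ?_ * _
      nlinarith [mul_le_mul_of_nonneg_left hΔ1 (sq_nonneg M2)]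

/-- First-order Taylor approximation of the per-step variance (Eq. (7) of the
paper): there is `C > 0` such that for all `0 ≤ a ≤ b ≤ 1`,
`|Var_{μ_a}[log p*(b, ·) − log p*(a, ·)] − (b − a)² g(a)| ≤ C (b − a)³`. -/
theorem per_step_variance_taylor
    {V : Type*} [Fintype V] [Nonempty V] (pstar : ℝ → V → ℝ)
    (hpos : ∀ b ∈ Set.Icc (0 : ℝ) 1, ∀ v : V, 0 < pstar b v)
    (hsmooth : ∀ v : V,
      ContDiffOn ℝ 2 (fun b => Real.log (pstar b v)) (Set.Icc 0 1)) :
    ∃ C > 0, ∀ a b : ℝ, 0 ≤ a → a ≤ b → b ≤ 1 →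
      |pmfVar (aisDist pstar a)
          (fun v => Real.log (pstar b v) - Real.log (pstar a v))
        - (b - a) ^ 2 * gfun pstar a| ≤ C * (b - a) ^ 3 :=
  per_step_variance_taylor_general pstar hpos hsmooth
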